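/- Let u and v be solutions of (EL). If min(u, v) is a solution of (EL), or if max(u, v) is a solution of (EL), then u < v, or u = v, or u > v. -/

import Mathlib

open scoped BigOperators

namespace FK

/-- The lattice `ℤ^n`. -/
abbrev Lat (n : ℕ) := Fin n → ℤ

/-- The `ℓ¹` norm on `ℤ^n`. -/
def latNorm {n : ℕ} (i : Lat n) : ℕ := ∑ k, (i k).natAbs

/-- The ball `B_0^r = {k ∈ ℤ^n : ‖k‖ ≤ r}`. -/
abbrev B0 (n r : ℕ) := {k : Lat n // latNorm k ≤ r}

lemma B0.coord_mem {n r : ℕ} (k : B0 n r) (i : Fin n) :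
    k.1 i ∈ Finset.Icc (-(r : ℤ)) (r : ℤ) := by
  have h1 : (k.1 i).natAbs ≤ latNorm k.1 :=
    Finset.single_le_sum (f := fun j => (k.1 j).natAbs) (fun _ _ => Nat.zero_le _)
      (Finset.mem_univ i)
  have h2 := k.2
  simp only [Finset.mem_Icc]
  omega

noncomputable instance B0.instFintype (n r : ℕ) : Fintype (B0 n r) :=
  Fintype.ofInjective
    (fun k : B0 n r => (fun i => (⟨k.1 i, B0.coord_mem k i⟩ : (Finset.Icc (-(r : ℤ)) (r : ℤ)))))
    (fun a b h => Subtype.ext (funext fun i => congrArg Subtype.val (congrFun h i)))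

/-- The center of the ball `B_0^r`. -/
def B0.zero (n r : ℕ) : B0 n r := ⟨0, by simp [latNorm]⟩

/-- The local potential `S_j(u) = s((i ↦ u(j+i))|_{B_0^r})`. -/
noncomputable def Spot {n r : ℕ} (s : (B0 n r → ℝ) → ℝ) (j : Lat n) (u : Lat n → ℝ) : ℝ :=
  s fun k => u (j + k.1)

/-- The partial derivative of `s : ℝ^{B_0^r} → ℝ` with respect to the coordinate `k`. -/
noncomputable def pder {n r : ℕ} (s : (B0 n r → ℝ) → ℝ) (k : B0 n r) (x : B0 n r → ℝ) : ℝ :=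
  deriv (fun t => s (Function.update x k t)) (x k)

/-- The partial derivative `∂_i S_j(u)` of `S_j` with respect to the variable `u(i)`. -/
noncomputable def pderS {n r : ℕ} (s : (B0 n r → ℝ) → ℝ) (i j : Lat n) (u : Lat n → ℝ) : ℝ :=
  deriv (fun t => Spot s j (Function.update u i t)) (u i)

/-- Conditions (S1)–(S3) on the potential, together with `C²` smoothness. -/
structure IsPotential (n r : ℕ) (s : (B0 n r → ℝ) → ℝ) : Prop where
  smooth : ContDiff ℝ 2 s
  periodic : ∀ x : B0 n r → ℝ, s (fun k => x k + 1) = s x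
  bddBelow : ∃ M : ℝ, ∀ x, M ≤ s x
  coercive : ∀ k j : B0 n r, latNorm (k.1 - j.1) = 1 →
    ∀ C : ℝ, ∃ R : ℝ, ∀ x : B0 n r → ℝ, R ≤ |x k - x j| → C ≤ s x
  cross_nonpos : ∀ k j : B0 n r, k ≠ j → ∀ x, pder (pder s j) k x ≤ 0
  cross_neg : ∀ j : B0 n r, latNorm j.1 = 1 → ∀ x, pder (pder s j) (B0.zero n r) x < 0

/-- `u` satisfies the Euler–Lagrange equation (EL) at the site `i`. -/
def SolvesAt {n r : ℕ} (s : (B0 n r → ℝ) → ℝ) (u : Lat n → ℝ) (i : Lat n) : Prop :=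
  ∑ k : B0 n r, pderS s i (i + k.1) u = 0

/-- `u` is a solution of the Euler–Lagrange equation (EL). -/
def IsSolution {n r : ℕ} (s : (B0 n r → ℝ) → ℝ) (u : Lat n → ℝ) : Prop :=
  ∀ i : Lat n, SolvesAt s u i

/-- The `m`-th standard basis vector of `ℤ^n` (`0`-indexed: `latE 0 = e_1`). -/
def latE {n : ℕ} (m : ℕ) : Lat n := fun k => if (k : ℕ) = m then 1 else 0

/-- The lattice point `T_i = (i,0,…,0)`. -/
def latT {n : ℕ} (i : ℤ) : Lat n := fun k => if (k : ℕ) = 0 then i else 0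

/-- The first coordinate index of `Fin (n+2)`. -/
def coord0 (n : ℕ) : Fin (n + 2) := ⟨0, by omega⟩

/-- The second coordinate index of `Fin (n+2)`. -/
def coord1 (n : ℕ) : Fin (n + 2) := ⟨1, by omega⟩

/-- Configurations of period one in every coordinate direction (the set `Γ_0`). -/
def fullyPeriodic {n : ℕ} (u : Lat n → ℝ) : Prop :=
  ∀ i : Lat n, ∀ k : Fin n, u (i + latE (k : ℕ)) = u i

noncomputable def J0 {n r : ℕ} (s : (B0 n r → ℝ) → ℝ) (u : Lat n → ℝ) : ℝ := Spot s 0 u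

noncomputable def c0 {n r : ℕ} (s : (B0 n r → ℝ) → ℝ) : ℝ :=
  sInf (J0 s '' {u | fullyPeriodic u})

def M0 {n r : ℕ} (s : (B0 n r → ℝ) → ℝ) : Set (Lat n → ℝ) :=
  {u | fullyPeriodic u ∧ J0 s u = c0 s}

/-- `v`, `w` form an adjacent (gap) pair of the set `A`:  `v < w` pointwise, both belong to
`A`, and no element of `A` lies strictly between them. -/
def Adjacent {n : ℕ} (A : Set (Lat n → ℝ)) (v w : Lat n → ℝ) : Prop :=
  v ∈ A ∧ w ∈ A ∧ (∀ i, v i < w i) ∧ ∀ u ∈ A, v ≤ u → u ≤ w → u = v ∨ u = w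

/-- Configurations of period one in the coordinate directions `2,…,n`. -/
def tailPeriodic {n : ℕ} (u : Lat n → ℝ) : Prop :=
  ∀ i : Lat n, ∀ k : Fin n, (k : ℕ) ≠ 0 → u (i + latE (k : ℕ)) = u i

/-- The set `Γ̂_1(v,w)`. -/
def Gamma1hat {n : ℕ} (v w : Lat n → ℝ) : Set (Lat n → ℝ) :=
  {u | tailPeriodic u ∧ v ≤ u ∧ u ≤ w}

noncomputable def J1i {n r : ℕ} (s : (B0 n r → ℝ) → ℝ) (i : ℤ) (u : Lat n → ℝ) : ℝ :=
  Spot s (latT i) u - c0 s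

noncomputable def J1pq {n r : ℕ} (s : (B0 n r → ℝ) → ℝ) (p q : ℤ) (u : Lat n → ℝ) : ℝ :=
  ∑ i ∈ Finset.Icc p q, J1i s i u

/-- The renormalized functional `J_1 = liminf_{p→-∞, q→∞} J_{1;p,q}`, as an extended real. -/
noncomputable def J1 {n r : ℕ} (s : (B0 n r → ℝ) → ℝ) (u : Lat n → ℝ) : EReal :=
  Filter.liminf (fun pq : ℤ × ℤ => ((J1pq s pq.1 pq.2 u : ℝ) : EReal))
    (Filter.atBot ×ˢ Filter.atTop)

/-- The filter `|i| → ∞` on `ℤ`. -/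
noncomputable def absAtTop : Filter ℤ := Filter.comap (fun i : ℤ => |i|) Filter.atTop

/-- The set `Γ_1(v,w)` of configurations heteroclinic in `i_1` from `v` to `w`. -/
def Gamma1 {n : ℕ} (v w : Lat n → ℝ) : Set (Lat n → ℝ) :=
  {u | u ∈ Gamma1hat v w ∧
    Filter.Tendsto (fun i : ℤ => |u (latT i) - v (latT i)|) Filter.atBot (nhds 0) ∧
    Filter.Tendsto (fun i : ℤ => |u (latT i) - w (latT i)|) Filter.atTop (nhds 0)}

noncomputable def c1 {n r : ℕ} (s : (B0 n r → ℝ) → ℝ) (v w : Lat n → ℝ) : EReal :=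
  sInf (J1 s '' Gamma1 v w)

def M1 {n r : ℕ} (s : (B0 n r → ℝ) → ℝ) (v w : Lat n → ℝ) : Set (Lat n → ℝ) :=
  {u ∈ Gamma1 v w | J1 s u = c1 s v w}

/-- The set `Γ_1(w,v)` of configurations heteroclinic in `i_1` from `w` down to `v`. -/
def Gamma1rev {n : ℕ} (v w : Lat n → ℝ) : Set (Lat n → ℝ) :=
  {u | u ∈ Gamma1hat v w ∧
    Filter.Tendsto (fun i : ℤ => |u (latT i) - w (latT i)|) Filter.atBot (nhds 0) ∧
    Filter.Tendsto (fun i : ℤ => |u (latT i) - v (latT i)|) Filter.atTop (nhds 0)}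

noncomputable def c1rev {n r : ℕ} (s : (B0 n r → ℝ) → ℝ) (v w : Lat n → ℝ) : EReal :=
  sInf (J1 s '' Gamma1rev v w)

def M1rev {n r : ℕ} (s : (B0 n r → ℝ) → ℝ) (v w : Lat n → ℝ) : Set (Lat n → ℝ) :=
  {u ∈ Gamma1rev v w | J1 s u = c1rev s v w}

/-- The set `Γ_1(v)`, for `v ∈ M_0`. -/
def Gamma1v {n : ℕ} (v : Lat n → ℝ) : Set (Lat n → ℝ) :=
  {u | u ∈ Gamma1hat (fun i => v i - 1) (fun i => v i + 1) ∧
    Filter.Tendsto (fun i : ℤ => |u (latT i) - v (latT i)|) absAtTop (nhds 0)}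

noncomputable def c1v {n r : ℕ} (s : (B0 n r → ℝ) → ℝ) (v : Lat n → ℝ) : EReal :=
  sInf (J1 s '' Gamma1v v)

def M1v {n r : ℕ} (s : (B0 n r → ℝ) → ℝ) (v : Lat n → ℝ) : Set (Lat n → ℝ) :=
  {u ∈ Gamma1v v | J1 s u = c1v s v}

/-! ### Periodic configurations with general periods (`Γ_0(l)` etc.) -/

def GammaPer {n : ℕ} (l : Fin n → ℕ) : Set (Lat n → ℝ) :=
  {u | ∀ i : Lat n, ∀ k : Fin n, u (i + (l k : ℤ) • latE (k : ℕ)) = u i}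

noncomputable def J0l {n r : ℕ} (s : (B0 n r → ℝ) → ℝ) (l : Fin n → ℕ) (u : Lat n → ℝ) : ℝ :=
  ∑ i ∈ Fintype.piFinset (fun k => Finset.Ico (0 : ℤ) (l k)), Spot s i u

noncomputable def c0l {n r : ℕ} (s : (B0 n r → ℝ) → ℝ) (l : Fin n → ℕ) : ℝ :=
  sInf (J0l s l '' GammaPer l)

def M0l {n r : ℕ} (s : (B0 n r → ℝ) → ℝ) (l : Fin n → ℕ) : Set (Lat n → ℝ) :=
  {u ∈ GammaPer l | J0l s l u = c0l s l}

/-! ### The `l`-periodic analogues of `Γ_1` (for Proposition 3.20) -/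

/-- The finite slice `{j | j_1 = i, 0 ≤ j_k < l_k (k ≥ 2)}`. -/
noncomputable def sliceBox {n : ℕ} (l : Fin n → ℕ) (i : ℤ) : Finset (Lat n) :=
  Fintype.piFinset fun k => if (k : ℕ) = 0 then {i} else Finset.Ico (0 : ℤ) (l k)

def tailPeriodicL {n : ℕ} (l : Fin n → ℕ) (u : Lat n → ℝ) : Prop :=
  ∀ i : Lat n, ∀ k : Fin n, (k : ℕ) ≠ 0 → u (i + (l k : ℤ) • latE (k : ℕ)) = u i

/-- `∏_{k=2}^{n} l_k`. -/
noncomputable def tailProd {n : ℕ} (l : Fin n → ℕ) : ℝ :=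
  ∏ k ∈ Finset.univ.filter (fun k : Fin n => (k : ℕ) ≠ 0), (l k : ℝ)

noncomputable def J1il {n r : ℕ} (s : (B0 n r → ℝ) → ℝ) (l : Fin n → ℕ) (i : ℤ)
    (u : Lat n → ℝ) : ℝ :=
  (∑ j ∈ sliceBox l i, Spot s j u) - tailProd l * c0 s

noncomputable def J1pql {n r : ℕ} (s : (B0 n r → ℝ) → ℝ) (l : Fin n → ℕ) (p q : ℤ)
    (u : Lat n → ℝ) : ℝ :=
  ∑ i ∈ Finset.Icc p q, J1il s l i u

noncomputable def J1l {n r : ℕ} (s : (B0 n r → ℝ) → ℝ) (l : Fin n → ℕ) (u : Lat n → ℝ) :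
    EReal :=
  Filter.liminf (fun pq : ℤ × ℤ => ((J1pql s l pq.1 pq.2 u : ℝ) : EReal))
    (Filter.atBot ×ˢ Filter.atTop)

def Gamma1hatL {n : ℕ} (l : Fin n → ℕ) (v w : Lat n → ℝ) : Set (Lat n → ℝ) :=
  {u | tailPeriodicL l u ∧ v ≤ u ∧ u ≤ w}

def Gamma1L {n : ℕ} (l : Fin n → ℕ) (v w : Lat n → ℝ) : Set (Lat n → ℝ) :=
  {u | u ∈ Gamma1hatL l v w ∧
    Filter.Tendsto (fun i : ℤ => ∑ j ∈ sliceBox l i, |u j - v j|) Filter.atBot (nhds 0) ∧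
    Filter.Tendsto (fun i : ℤ => ∑ j ∈ sliceBox l i, |u j - w j|) Filter.atTop (nhds 0)}

noncomputable def c1L {n r : ℕ} (s : (B0 n r → ℝ) → ℝ) (l : Fin n → ℕ) (v w : Lat n → ℝ) :
    EReal :=
  sInf (J1l s l '' Gamma1L l v w)

def M1L {n r : ℕ} (s : (B0 n r → ℝ) → ℝ) (l : Fin n → ℕ) (v w : Lat n → ℝ) :
    Set (Lat n → ℝ) :=
  {u ∈ Gamma1L l v w | J1l s l u = c1L s l v w}

/-! ### Minimal and Birkhoff configurations -/

/-- `u` is a (global) minimizer for the potentials `S_j`. -/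
def Minimal {n r : ℕ} (s : (B0 n r → ℝ) → ℝ) (u : Lat n → ℝ) : Prop :=
  ∀ B : Finset (Lat n), ∀ v : Lat n → ℝ,
    (∀ i : Lat n, v i ≠ 0 → i ∈ B ∧ ∀ k : Lat n, latNorm (k - i) ≤ r → k ∈ B) →
    ∑ j ∈ B, Spot s j u ≤ ∑ j ∈ B, Spot s j (u + v)

/-- `u` is Birkhoff: all its integer translates are comparable with `u`. -/
def Birkhoff {n : ℕ} (u : Lat n → ℝ) : Prop :=
  ∀ k : Fin n, ∀ j : ℤ,
    (∀ i, u (i + j • latE (k : ℕ)) < u i) ∨ (∀ i, u (i + j • latE (k : ℕ)) = u i) ∨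
      (∀ i, u i < u (i + j • latE (k : ℕ)))

/-! ### The second-order objects (`Γ̂_2`, `J_2`, `M_2`) -/

/-- Configurations of period one in the coordinate directions `3,…,n`. -/
def tailPeriodic2 {n : ℕ} (u : Lat n → ℝ) : Prop :=
  ∀ i : Lat n, ∀ k : Fin n, 2 ≤ (k : ℕ) → u (i + latE (k : ℕ)) = u i

/-- The set `Γ̂_2(v,w)`. -/
def Gamma2hat {n : ℕ} (v w : Lat n → ℝ) : Set (Lat n → ℝ) :=
  {u | tailPeriodic2 u ∧ v ≤ u ∧ u ≤ w}

/-- The row `E_i = {j ∈ ℤ^n : j_2 = i, j_3 = ⋯ = j_n = 0}`. -/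
def Erow (n : ℕ) (i : ℤ) : Set (Lat n) :=
  {j | (∀ k : Fin n, (k : ℕ) = 1 → j k = i) ∧ ∀ k : Fin n, 2 ≤ (k : ℕ) → j k = 0}

/-- `J_{2,i}(u) = J_1(τ²_{-i} u) - c_1 = ∑_{j ∈ E_0} [S_j(τ²_{-i}u) - S_j(v)]`, where `v` is the
base configuration. -/
noncomputable def J2i {n r : ℕ} (s : (B0 n r → ℝ) → ℝ) (v : Lat n → ℝ) (i : ℤ)
    (u : Lat n → ℝ) : ℝ :=
  ∑' j : Erow n 0, (Spot s j.1 (fun x => u (x + i • latE 1)) - Spot s j.1 v)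

noncomputable def J2pq {n r : ℕ} (s : (B0 n r → ℝ) → ℝ) (v : Lat n → ℝ) (p q : ℤ)
    (u : Lat n → ℝ) : ℝ :=
  ∑ i ∈ Finset.Icc p q, J2i s v i u

/-- The renormalized functional `J_2`, as an extended real. -/
noncomputable def J2 {n r : ℕ} (s : (B0 n r → ℝ) → ℝ) (v : Lat n → ℝ) (u : Lat n → ℝ) :
    EReal :=
  Filter.liminf (fun pq : ℤ × ℤ => ((J2pq s v pq.1 pq.2 u : ℝ) : EReal))
    (Filter.atBot ×ˢ Filter.atTop)

/-- The set `Γ_2(v,w)` of configurations heteroclinic in `i_2` from `v` to `w`. -/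
def Gamma2 {n : ℕ} (v w : Lat n → ℝ) : Set (Lat n → ℝ) :=
  {u | u ∈ Gamma2hat v w ∧
    Filter.Tendsto (fun i : ℤ => ∑' j : Erow n i, |u j.1 - v j.1|) Filter.atBot (nhds 0) ∧
    Filter.Tendsto (fun i : ℤ => ∑' j : Erow n i, |u j.1 - w j.1|) Filter.atTop (nhds 0)}

noncomputable def c2 {n r : ℕ} (s : (B0 n r → ℝ) → ℝ) (v w : Lat n → ℝ) : EReal :=
  sInf (J2 s v '' Gamma2 v w)

def M2 {n r : ℕ} (s : (B0 n r → ℝ) → ℝ) (v w : Lat n → ℝ) : Set (Lat n → ℝ) :=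
  {u ∈ Gamma2 v w | J2 s v u = c2 s v w}



/-! ### Auxiliary lemmas for Statement 0 -/

section Aux

variable {n r : ℕ} {s : (B0 n r → ℝ) → ℝ}

lemma hasDerivAt_update (x : B0 n r → ℝ) (k : B0 n r) (t : ℝ) :
    HasDerivAt (fun t : ℝ => Function.update x k t) (Pi.single k 1) t := by
  classical
  have hline : (fun t : ℝ => Function.update x k t)
      = fun t => x + (t - x k) • (Pi.single k 1 : B0 n r → ℝ) := by
    funext t' j
    by_cases h : j = k
    · subst h
      simp [Function.update_self, Pi.single_apply]
    · simp [Function.update_of_ne h, Pi.single_apply, h]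
  rw [hline]
  have h1 : HasDerivAt (fun t : ℝ => t - x k) 1 t := (hasDerivAt_id t).sub_const _
  simpa using (h1.smul_const (Pi.single k (1 : ℝ))).const_add x

lemma pder_eq_fderiv (hds : Differentiable ℝ s) (k : B0 n r) (x : B0 n r → ℝ) :
    pder s k x = fderiv ℝ s x (Pi.single k 1) := by
  classical
  have h1 := hasDerivAt_update x k (x k)
  have h2 : HasFDerivAt s (fderiv ℝ s x) (Function.update x k (x k)) := by
    rw [Function.update_eq_self]
    exact (hds x).hasFDerivAt
  have h3 := HasFDerivAt.comp_hasDerivAt (x k) h2 h1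
  have h4 : HasDerivAt (fun t => s (Function.update x k t))
      (fderiv ℝ s x (Pi.single k 1)) (x k) := by
    exact h3
  exact h4.deriv

lemma pder_pder_eq_fderiv (hs2 : ContDiff ℝ 2 s) (j k : B0 n r) (x : B0 n r → ℝ) :
    pder (pder s j) k x = (fderiv ℝ (fderiv ℝ s) x (Pi.single k 1)) (Pi.single j 1) := by
  classical
  have hds : Differentiable ℝ s := hs2.differentiable (by norm_num)
  have hdF : Differentiable ℝ (fderiv ℝ s) :=
    (hs2.fderiv_right (m := 1) (by norm_num)).differentiable (by norm_num)
  have hfun : pder s j = fun y => fderiv ℝ s y (Pi.single j 1) :=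
    funext fun y => pder_eq_fderiv hds j y
  show deriv (fun t => (pder s j) (Function.update x k t)) (x k) = _
  rw [hfun]
  have hc : HasDerivAt (fun t : ℝ => fderiv ℝ s (Function.update x k t))
      (fderiv ℝ (fderiv ℝ s) x (Pi.single k 1)) (x k) := by
    have h2 : HasFDerivAt (fderiv ℝ s) (fderiv ℝ (fderiv ℝ s) x)
        (Function.update x k (x k)) := by
      rw [Function.update_eq_self]
      exact (hdF x).hasFDerivAt
    exact HasFDerivAt.comp_hasDerivAt (x k) h2 (hasDerivAt_update x k (x k))
  have h5 := hc.clm_apply (hasDerivAt_const (x k) (Pi.single j (1 : ℝ)))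
  simpa using h5.deriv

lemma latNorm_neg (x : Lat n) : latNorm (-x) = latNorm x := by
  unfold latNorm
  refine Finset.sum_congr rfl fun k _ => ?_
  simp [Int.natAbs_neg]

lemma negk_mem (k : B0 n r) : latNorm (-k.1) ≤ r := by
  rw [latNorm_neg]; exact k.2

/-- Negation on the ball `B₀`. -/
def negk (k : B0 n r) : B0 n r := ⟨-k.1, negk_mem k⟩

lemma pderS_eq (i j : Lat n) (h : latNorm (i - j) ≤ r) (u : Lat n → ℝ) :
    pderS s i j u = pder s ⟨i - j, h⟩ (fun κ => u (j + κ.1)) := by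
  classical
  have key : ∀ t : ℝ, (fun κ : B0 n r => Function.update u i t (j + κ.1))
      = Function.update (fun κ : B0 n r => u (j + κ.1)) ⟨i - j, h⟩ t := by
    intro t
    funext κ
    by_cases hc : κ = (⟨i - j, h⟩ : B0 n r)
    · subst hc
      rw [Function.update_self]
      rw [show j + (i - j) = i by abel, Function.update_self]
    · rw [Function.update_of_ne hc, Function.update_of_ne]
      intro he
      exact hc (Subtype.ext (eq_sub_of_add_eq' he))
  show deriv (fun t => Spot s j (Function.update u i t)) (u i) = _
  unfold Spot pder
  simp only [key]
  rw [show j + (i - j) = i by abel]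

lemma pderS_shift (i : Lat n) (k : B0 n r) (u : Lat n → ℝ) :
    pderS s i (i + k.1) u = pder s (negk k) (fun κ => u (i + k.1 + κ.1)) := by
  have h : latNorm (i - (i + k.1)) ≤ r := by
    rw [show i - (i + k.1) = -k.1 by abel]; exact negk_mem k
  rw [pderS_eq i (i + k.1) h u]
  congr 1
  exact Subtype.ext (show i - (i + k.1) = -k.1 by abel)


lemma latNorm_eq_zero {x : Lat n} (h : latNorm x = 0) : x = 0 := by
  funext k
  have h1 : ∀ j ∈ Finset.univ, (x j).natAbs = 0 :=
    Finset.sum_eq_zero_iff.1 h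
  have := h1 k (Finset.mem_univ k)
  show x k = 0
  omega

lemma latNorm_step {x : Lat n} {d : ℕ} (h : latNorm x = d + 1) :
    ∃ x' : Lat n, latNorm x' = d ∧ latNorm (x - x') = 1 := by
  classical
  have hx : x ≠ 0 := by
    intro h0
    rw [h0] at h
    simp [latNorm] at h
  obtain ⟨m, hm⟩ : ∃ m, x m ≠ 0 := by
    by_contra hcon
    push_neg at hcon
    exact hx (funext fun k => hcon k)
  set c : ℤ := if 0 < x m then x m - 1 else x m + 1 with hc
  refine ⟨Function.update x m c, ?_, ?_⟩
  · have e1 : latNorm x = (x m).natAbs + ∑ j ∈ Finset.univ.erase m, (x j).natAbs :=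
      (Finset.add_sum_erase _ (fun j => (x j).natAbs) (Finset.mem_univ m)).symm
    have e2 : latNorm (Function.update x m c)
        = c.natAbs + ∑ j ∈ Finset.univ.erase m, (x j).natAbs := by
      unfold latNorm
      rw [← Finset.add_sum_erase _ _ (Finset.mem_univ m), Function.update_self]
      congr 1
      exact Finset.sum_congr rfl fun j hj => by
        rw [Function.update_of_ne (Finset.ne_of_mem_erase hj)]
    have e3 : c.natAbs + 1 = (x m).natAbs := by
      simp only [hc]; split_ifs <;> omega
    rw [e1] at h
    omega
  · have e4 : latNorm (x - Function.update x m c)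
        = ((x - Function.update x m c) m).natAbs := by
      unfold latNorm
      refine Finset.sum_eq_single m (fun j _ hj => ?_) (fun hmem => absurd (Finset.mem_univ m) hmem)
      simp [Function.update_of_ne hj]
    rw [e4]
    simp only [Pi.sub_apply, Function.update_self, hc]
    split_ifs <;> omega

lemma touch_step (hr : 1 ≤ r) (hs : IsPotential n r s) {u w : Lat n → ℝ}
    (hle : ∀ j, w j ≤ u j) (i : Lat n)
    (hui : SolvesAt s u i) (hwi : SolvesAt s w i) (heq : w i = u i)
    (m : Lat n) (hm : latNorm (m - i) = 1) : w m = u m := by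
  classical
  have hds : Differentiable ℝ s := hs.smooth.differentiable (by norm_num)
  have hdF : Differentiable ℝ (fderiv ℝ s) :=
    (hs.smooth.fderiv_right (m := 1) (by norm_num)).differentiable (by norm_num)
  set y : B0 n r → B0 n r → ℝ := fun k κ => w (i + k.1 + κ.1) with hy
  set z : B0 n r → B0 n r → ℝ := fun k κ => u (i + k.1 + κ.1) - w (i + k.1 + κ.1) with hz
  set φ : ℝ → ℝ :=
    fun t => ∑ k : B0 n r, fderiv ℝ s (y k + t • z k) (Pi.single (negk k) 1) with hφ
  -- the derivative of φ
  have hD : ∀ t, HasDerivAt φ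
      (∑ k : B0 n r, (fderiv ℝ (fderiv ℝ s) (y k + t • z k) (z k)) (Pi.single (negk k) 1)) t := by
    intro t
    apply HasDerivAt.fun_sum
    intro k _
    have hline : HasDerivAt (fun t : ℝ => y k + t • z k) (z k) t := by
      simpa using ((hasDerivAt_id t).smul_const (z k)).const_add (y k)
    have hcomp : HasDerivAt (fun t : ℝ => fderiv ℝ s (y k + t • z k))
        (fderiv ℝ (fderiv ℝ s) (y k + t • z k) (z k)) t := by
      exact
        HasFDerivAt.comp_hasDerivAt t (hdF (y k + t • z k)).hasFDerivAt hline
    simpa using hcomp.clm_apply (hasDerivAt_const t (Pi.single (negk k) (1 : ℝ)))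
  -- expand the derivative into individual second-derivative terms
  have hterm : ∀ (t : ℝ) (k : B0 n r),
      (fderiv ℝ (fderiv ℝ s) (y k + t • z k) (z k)) (Pi.single (negk k) 1)
      = ∑ κ : B0 n r, z k κ * pder (pder s (negk k)) κ (y k + t • z k) := by
    intro t k
    have hzk : z k = ∑ κ : B0 n r, z k κ • (Pi.single κ 1 : B0 n r → ℝ) := by
      conv_lhs => rw [← Finset.univ_sum_single (z k)]
      refine Finset.sum_congr rfl fun κ _ => ?_
      funext a
      by_cases ha : a = κ <;> simp [Pi.single_apply, ha]
    have main : ∀ L : (B0 n r → ℝ) →L[ℝ] ((B0 n r → ℝ) →L[ℝ] ℝ),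
        L (z k) (Pi.single (negk k) 1)
        = ∑ κ : B0 n r, z k κ * (L (Pi.single κ 1)) (Pi.single (negk k) 1) := by
      intro L
      conv_lhs => rw [hzk]
      rw [map_sum, ContinuousLinearMap.sum_apply]
      refine Finset.sum_congr rfl fun κ _ => ?_
      rw [map_smul, ContinuousLinearMap.smul_apply, smul_eq_mul]
    rw [main (fderiv ℝ (fderiv ℝ s) (y k + t • z k))]
    refine Finset.sum_congr rfl fun κ _ => ?_
    rw [pder_pder_eq_fderiv hs.smooth (negk k) κ (y k + t • z k)]
  -- every term is nonpositive
  have hTnp : ∀ (t : ℝ) (k κ : B0 n r),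
      z k κ * pder (pder s (negk k)) κ (y k + t • z k) ≤ 0 := by
    intro t k κ
    by_cases hκ : κ = negk k
    · subst hκ
      have hz0 : z k (negk k) = 0 := by
        simp only [hz]
        rw [show i + k.1 + (negk k).1 = i from by show i + k.1 + -k.1 = i; abel, heq, sub_self]
      rw [hz0, zero_mul]
    · have h1 : 0 ≤ z k κ := by
        simp only [hz]
        exact sub_nonneg.2 (hle _)
      have h2 := hs.cross_nonpos κ (negk k) hκ (y k + t • z k)
      exact mul_nonpos_iff.2 (Or.inl ⟨h1, h2⟩)
  -- endpoints
  have hφ0 : φ 0 = 0 := by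
    have e : φ 0 = ∑ k : B0 n r, pderS s i (i + k.1) w := by
      refine Finset.sum_congr rfl fun k _ => ?_
      rw [pderS_shift, pder_eq_fderiv hds]
      have harg : y k + (0 : ℝ) • z k = fun κ => w (i + k.1 + κ.1) := by
        funext κ; simp [hy]
      rw [harg]
    rw [e]; exact hwi
  have hφ1 : φ 1 = 0 := by
    have e : φ 1 = ∑ k : B0 n r, pderS s i (i + k.1) u := by
      refine Finset.sum_congr rfl fun k _ => ?_
      rw [pderS_shift, pder_eq_fderiv hds]
      have harg : y k + (1 : ℝ) • z k = fun κ => u (i + k.1 + κ.1) := by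
        funext κ
        simp only [hy, hz, Pi.add_apply, Pi.smul_apply, one_smul]
        ring
      rw [harg]
    rw [e]; exact hui
  -- φ is antitone
  have hanti : Antitone φ := by
    refine antitone_of_deriv_nonpos (fun t => (hD t).differentiableAt) fun t => ?_
    rw [(hD t).deriv]
    refine Finset.sum_nonpos fun k _ => ?_
    rw [hterm t k]
    exact Finset.sum_nonpos fun κ _ => hTnp t k κ
  -- φ vanishes on (0,1), hence its derivative at 1/2 vanishes
  have hev : φ =ᶠ[nhds (1 / 2 : ℝ)] fun _ => 0 := by
    have hmem : Set.Ioo (0 : ℝ) 1 ∈ nhds (1 / 2 : ℝ) :=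
      Ioo_mem_nhds (by norm_num) (by norm_num)
    filter_upwards [hmem] with t ht
    have h1 : φ t ≤ φ 0 := hanti ht.1.le
    have h2 : φ 1 ≤ φ t := hanti ht.2.le
    show φ t = 0
    rw [hφ0] at h1; rw [hφ1] at h2
    linarith
  have hderiv0 : deriv φ (1 / 2 : ℝ) = 0 := by
    rw [hev.deriv_eq]; exact deriv_const _ _
  have hsum0 : (∑ k : B0 n r, ∑ κ : B0 n r,
      z k κ * pder (pder s (negk k)) κ (y k + (1 / 2 : ℝ) • z k)) = 0 := by
    calc (∑ k : B0 n r, ∑ κ : B0 n r,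
        z k κ * pder (pder s (negk k)) κ (y k + (1 / 2 : ℝ) • z k))
        = ∑ k : B0 n r, (fderiv ℝ (fderiv ℝ s) (y k + (1 / 2 : ℝ) • z k) (z k))
            (Pi.single (negk k) 1) :=
          Finset.sum_congr rfl fun k _ => (hterm _ k).symm
      _ = deriv φ (1 / 2 : ℝ) := ((hD (1 / 2 : ℝ)).deriv).symm
      _ = 0 := hderiv0
  -- hence each term vanishes
  have houter := (Finset.sum_eq_zero_iff_of_nonpos fun k _ =>
    Finset.sum_nonpos fun κ _ => hTnp (1 / 2 : ℝ) k κ).1 hsum0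
  -- the special term for the neighbour m
  have hk0 : latNorm (m - i) ≤ r := by omega
  set k0 : B0 n r := ⟨m - i, hk0⟩ with hk0def
  have hterm0 : z k0 (B0.zero n r) * pder (pder s (negk k0)) (B0.zero n r)
      (y k0 + (1 / 2 : ℝ) • z k0) = 0 := by
    have hinner := (Finset.sum_eq_zero_iff_of_nonpos fun κ _ =>
      hTnp (1 / 2 : ℝ) k0 κ).1 (houter k0 (Finset.mem_univ k0))
    exact hinner (B0.zero n r) (Finset.mem_univ _)
  have hneg : pder (pder s (negk k0)) (B0.zero n r) (y k0 + (1 / 2 : ℝ) • z k0) < 0 := by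
    refine hs.cross_neg (negk k0) ?_ _
    show latNorm (-(m - i)) = 1
    rw [latNorm_neg]; exact hm
  have hz0 : z k0 (B0.zero n r) = 0 := by
    rcases mul_eq_zero.1 hterm0 with h0 | h0
    · exact h0
    · exact absurd h0 hneg.ne
  have : u (i + (m - i) + (0 : Lat n)) - w (i + (m - i) + (0 : Lat n)) = 0 := by
    exact hz0
  rw [show i + (m - i) + (0 : Lat n) = m by abel] at this
  linarith

lemma touch (hr : 1 ≤ r) (hs : IsPotential n r s) {u w : Lat n → ℝ}
    (hu : IsSolution s u) (hw : IsSolution s w) (hle : ∀ j, w j ≤ u j)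
    (i₀ : Lat n) (heq : w i₀ = u i₀) : ∀ i, w i = u i := by
  have key : ∀ d : ℕ, ∀ i : Lat n, latNorm (i - i₀) = d → w i = u i := by
    intro d
    induction d with
    | zero =>
      intro i h
      rw [sub_eq_zero.1 (latNorm_eq_zero h)]
      exact heq
    | succ d ih =>
      intro i h
      obtain ⟨x', hx'd, hx'1⟩ := latNorm_step h
      have h1 : w (i₀ + x') = u (i₀ + x') :=
        ih (i₀ + x') (by rw [show i₀ + x' - i₀ = x' by abel]; exact hx'd)
      exact touch_step hr hs hle (i₀ + x') (hu _) (hw _) h1 i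
        (by rw [show i - (i₀ + x') = i - i₀ - x' by abel]; exact hx'1)
  intro i
  exact key (latNorm (i - i₀)) i rfl

end Aux

/-- if `min(u,v)` or `max(u,v)` is a solution of (EL), then `u < v`, `u = v`
or `u > v`. -/
theorem statement_0 (n r : ℕ) (s : (B0 (n + 2) (r + 1) → ℝ) → ℝ)
    (hs : IsPotential (n + 2) (r + 1) s) (u v : Lat (n + 2) → ℝ)
    (hu : IsSolution s u) (hv : IsSolution s v)
    (h : IsSolution s (fun i => min (u i) (v i)) ∨ IsSolution s (fun i => max (u i) (v i))) :
    (∀ i, u i < v i) ∨ u = v ∨ (∀ i, v i < u i) := by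
  have hr : 1 ≤ r + 1 := Nat.le_add_left 1 r
  rcases h with hmin | hmax
  · -- the case where `min(u,v)` is a solution
    by_cases h1 : ∀ i, u i < v i
    · exact Or.inl h1
    push_neg at h1
    obtain ⟨i1, hi1⟩ := h1
    have hmv : ∀ j : Lat (n + 2), min (u j) (v j) ≤ v j := fun j => min_le_right _ _
    have hmu : ∀ j : Lat (n + 2), min (u j) (v j) ≤ u j := fun j => min_le_left _ _
    have hveq : ∀ j, min (u j) (v j) = v j :=
      touch hr hs hv hmin hmv i1 (min_eq_right hi1)
    have hvu : ∀ j, v j ≤ u j := fun j => (hveq j) ▸ hmu j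
    by_cases h2 : ∀ i, v i < u i
    · exact Or.inr (Or.inr h2)
    push_neg at h2
    obtain ⟨i2, hi2⟩ := h2
    have hueq : ∀ j, min (u j) (v j) = u j :=
      touch hr hs hu hmin hmu i2 (min_eq_left hi2)
    have huv : ∀ j, u j ≤ v j := fun j => (hueq j) ▸ hmv j
    exact Or.inr (Or.inl (funext fun j => le_antisymm (huv j) (hvu j)))
  · -- the case where `max(u,v)` is a solution
    by_cases h1 : ∀ i, u i < v i
    · exact Or.inl h1
    push_neg at h1
    obtain ⟨i1, hi1⟩ := h1
    have hum : ∀ j : Lat (n + 2), u j ≤ max (u j) (v j) := fun j => le_max_left _ _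
    have hvm : ∀ j : Lat (n + 2), v j ≤ max (u j) (v j) := fun j => le_max_right _ _
    have hueq : ∀ j, u j = max (u j) (v j) :=
      touch hr hs hmax hu hum i1 (max_eq_left hi1).symm
    have hvu : ∀ j, v j ≤ u j := fun j => (hueq j).symm ▸ hvm j
    by_cases h2 : ∀ i, v i < u i
    · exact Or.inr (Or.inr h2)
    push_neg at h2
    obtain ⟨i2, hi2⟩ := h2
    have hveq : ∀ j, v j = max (u j) (v j) :=
      touch hr hs hmax hv hvm i2 (max_eq_right hi2).symm
    have huv : ∀ j, u j ≤ v j := fun j => (hveq j).symm ▸ hum j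
    exact Or.inr (Or.inl (funext fun j => le_antisymm (huv j) (hvu j)))

end FK
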